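/- arXiv:2402.03113 — 3 statements merged into one kernel-verified Lean document; each statement's English description precedes it below -/
import Mathlib

section
/- Bias bound for the non-projection/quasi-projection. Let {b_1, …, b_d} be a generating system of the subspace T with Gramian matrix G_{kl} := (b_k, b_l), and let λ_*(G) denote the smallest strictly positive eigenvalue of G. Let x_1, …, x_n be i.i.d. samples from μ and define the estimator P^n g := Σ_{k=1}^d (g, b_k)_n b_k. Then for every g ∈ H, E[(g, P^n g)] ≥ λ_*(G) ‖P g‖², where P is the H-orthogonal projection onto T; equality holds when G is the identity matrix. -/
/-! Write `P g = ∑ₖ aₖ bₖ`. Since `P` is a symmetric projection fixing every `bₖ`, the coefficients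
`(g, bₖ) = (P g, bₖ)` form the vector `G a`, while `‖P g‖² = aᵀ G a`. Each empirical inner product
`(g, bₖ)ₙ` is unbiased because `w dμ = dρ` on the support of `T`, so
`E[(g, Pⁿ g)] = ∑ₖ (g, bₖ)² = |G a|²`. In an eigenbasis of the positive semidefinite `G`, every
eigenvalue `λ` is `0` or at least `λ⋆`, so `λ⋆ λ t² ≤ λ² t²` termwise; this gives
`λ⋆ aᵀ G a ≤ |G a|²`, with equality when `G = 1`. -/

open MeasureTheory
open scoped RealInnerProductSpace Matrix

section Spectral

variable {E : Type*} [NormedAddCommGroup E] [InnerProductSpace ℝ E] [FiniteDimensional ℝ E]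

theorem LinearMap.IsPositive.mul_inner_apply_le_norm_apply_sq {T : E →ₗ[ℝ] E}
    (hT : T.IsPositive) {lam : ℝ} (hlam : ∀ μ, 0 < μ → Module.End.HasEigenvalue T μ → lam ≤ μ)
    (x : E) : lam * ⟪x, T x⟫ ≤ ‖T x‖ ^ 2 := by
  set e := hT.isSymmetric.eigenvectorBasis rfl
  set ev := hT.isSymmetric.eigenvalues rfl
  have hTx : ∀ i, e.repr (T x) i = ev i * e.repr x i :=
    hT.isSymmetric.eigenvectorBasis_apply_self_apply rfl x
  rw [← real_inner_self_eq_norm_sq, ← e.repr.inner_map_map, ← e.repr.inner_map_map,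
    PiLp.inner_apply, PiLp.inner_apply, Finset.mul_sum]
  refine Finset.sum_le_sum fun i _ => ?_
  have hev_nonneg : 0 ≤ ev i := hT.nonneg_eigenvalues rfl i
  have hev_ge : 0 < ev i → lam ≤ ev i := fun h =>
    hlam _ h (hT.isSymmetric.hasEigenvalue_eigenvalues rfl i)
  simp only [hTx, RCLike.inner_apply, conj_trivial]
  rcases hev_nonneg.eq_or_lt with h0 | hpos
  · simp [← h0]
  · nlinarith [mul_le_mul_of_nonneg_right (hev_ge hpos) hpos.le, sq_nonneg (e.repr x i)]

end Spectral

namespace Matrix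

variable {n : Type*} [Fintype n]

theorem hasEigenvalue_toEuclideanLin_iff [DecidableEq n] {A : Matrix n n ℝ} {μ : ℝ} :
    Module.End.HasEigenvalue (toEuclideanLin A) μ ↔ Module.End.HasEigenvalue (toLin' A) μ := by
  rw [Module.End.hasEigenvalue_iff_mem_spectrum, Module.End.hasEigenvalue_iff_mem_spectrum,
    spectrum_toLpLin, spectrum_toLin']

theorem PosSemidef.mul_dotProduct_mulVec_le [DecidableEq n] {A : Matrix n n ℝ}
    (hA : A.PosSemidef) {lam : ℝ}
    (hlam : ∀ μ, 0 < μ → Module.End.HasEigenvalue (toLin' A) μ → lam ≤ μ) (x : n → ℝ) :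
    lam * (x ⬝ᵥ A *ᵥ x) ≤ A *ᵥ x ⬝ᵥ A *ᵥ x := by
  have := (isPositive_toEuclideanLin_iff.mpr hA).mul_inner_apply_le_norm_apply_sq
    (fun μ hμ h => hlam μ hμ (hasEigenvalue_toEuclideanLin_iff.mp h)) (WithLp.toLp 2 x)
  simpa only [← real_inner_self_eq_norm_sq, toLpLin_toLp, EuclideanSpace.inner_toLp_toLp,
    star_trivial, toLin'_apply, dotProduct_comm x] using this

variable {E : Type*} [NormedAddCommGroup E] [InnerProductSpace ℝ E]

theorem gram_mulVec_apply (v : n → E) (a : n → ℝ) (k : n) :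
    (gram ℝ v *ᵥ a) k = ⟪v k, ∑ l, a l • v l⟫ := by
  simp [mulVec, dotProduct, inner_sum, real_inner_smul_right, mul_comm]

theorem dotProduct_gram_mulVec_self (v : n → E) (a : n → ℝ) :
    a ⬝ᵥ gram ℝ v *ᵥ a = ‖∑ l, a l • v l‖ ^ 2 := by
  rw [← real_inner_self_eq_norm_sq, ← star_dotProduct_gram_mulVec, star_trivial]

end Matrix

section EmpiricalMean

variable {Ω X : Type*} [MeasurableSpace Ω] [MeasurableSpace X] {ℙ : Measure Ω} {μ : Measure X}
  {n : ℕ} {Xs : Fin n → Ω → X} {f : X → ℝ}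

noncomputable def empiricalMean (Xs : Fin n → Ω → X) (f : X → ℝ) (ω : Ω) : ℝ :=
  (1 / (n : ℝ)) * ∑ i, f (Xs i ω)

theorem integrable_empiricalMean (hXs : ∀ i, AEMeasurable (Xs i) ℙ)
    (hmap : ∀ i, Measure.map (Xs i) ℙ = μ) (hf : Integrable f μ) :
    Integrable (empiricalMean Xs f) ℙ :=
  (integrable_finsetSum _ fun i _ => (hmap i ▸ hf).comp_aemeasurable (hXs i)).const_mul _

theorem integral_empiricalMean (hXs : ∀ i, AEMeasurable (Xs i) ℙ)
    (hmap : ∀ i, Measure.map (Xs i) ℙ = μ) (hn : 0 < n) (hf : Integrable f μ) :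
    ∫ ω, empiricalMean Xs f ω ∂ℙ = ∫ x, f x ∂μ := by
  have hcomp : ∀ i, ∫ ω, f (Xs i ω) ∂ℙ = ∫ x, f x ∂μ := fun i => by
    rw [← hmap i, integral_map (hXs i) (hmap i ▸ hf).aestronglyMeasurable]
  unfold empiricalMean
  rw [integral_const_mul, integral_finsetSum _ fun i _ => (hmap i ▸ hf).comp_aemeasurable (hXs i)]
  simp only [hcomp, Finset.sum_const, Finset.card_univ, Fintype.card_fin, nsmul_eq_mul]
  field_simp

-- No integrability of `f` is needed: otherwise `∫ f = 0` and the integrand vanishes.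
theorem integrable_empiricalMean_mul_integral (hXs : ∀ i, AEMeasurable (Xs i) ℙ)
    (hmap : ∀ i, Measure.map (Xs i) ℙ = μ) (f : X → ℝ) :
    Integrable (fun ω => empiricalMean Xs f ω * ∫ x, f x ∂μ) ℙ := by
  by_cases hf : Integrable f μ
  · exact (integrable_empiricalMean hXs hmap hf).mul_const _
  · simp [integral_undef hf]

theorem integral_empiricalMean_mul_integral (hXs : ∀ i, AEMeasurable (Xs i) ℙ)
    (hmap : ∀ i, Measure.map (Xs i) ℙ = μ) (hn : 0 < n) (f : X → ℝ) :
    ∫ ω, empiricalMean Xs f ω * ∫ x, f x ∂μ ∂ℙ = (∫ x, f x ∂μ) ^ 2 := by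
  by_cases hf : Integrable f μ
  · rw [integral_mul_const, integral_empiricalMean hXs hmap hn hf, sq]
  · simp [integral_undef hf]

theorem integral_sum_empiricalMean_mul_integral {ι : Type*} [Fintype ι]
    (hXs : ∀ i, AEMeasurable (Xs i) ℙ) (hmap : ∀ i, Measure.map (Xs i) ℙ = μ) (hn : 0 < n)
    (F : ι → X → ℝ) :
    ∫ ω, ∑ k, empiricalMean Xs (F k) ω * ∫ x, F k x ∂μ ∂ℙ = ∑ k, (∫ x, F k x ∂μ) ^ 2 := by
  rw [integral_finsetSum _ fun k _ => integrable_empiricalMean_mul_integral hXs hmap (F k)]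
  exact Finset.sum_congr rfl fun k _ => integral_empiricalMean_mul_integral hXs hmap hn (F k)

end EmpiricalMean

theorem quasi_projection_bias_bound_general
    {Ω : Type*} [MeasurableSpace Ω] (ℙ : Measure Ω)
    {X : Type*} [MeasurableSpace X] (ρ μm : Measure X)
    (w : X → ℝ)
    {H : Type*} [NormedAddCommGroup H] [InnerProductSpace ℝ H]
    (l : ℕ) (Lmap : X → H →ₗ[ℝ] EuclideanSpace ℝ (Fin l))
    -- the inner product of `H` is induced by the family `L_x`
    (hinner : ∀ u v : H, ⟪u, v⟫ = ∫ x, ⟪Lmap x u, Lmap x v⟫ ∂ρ)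
    -- the generating system of `T`
    (d : ℕ) (b : Fin d → H)
    -- `w dμ = dρ` on the support of `T`
    (hwμ : ∀ f : X → ℝ, (∀ x, (∀ k, Lmap x (b k) = 0) → f x = 0) →
      ∫ x, f x ∂ρ = ∫ x, w x * f x ∂μm)
    -- the Gramian matrix and its smallest strictly positive eigenvalue
    (G : Matrix (Fin d) (Fin d) ℝ) (hG : ∀ k l', G k l' = ⟪b k, b l'⟫)
    (lamStar : ℝ)
    (hlamStar :
      IsLeast {c : ℝ | 0 < c ∧ Module.End.HasEigenvalue (Matrix.toLin' G) c} lamStar)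
    -- the i.i.d. samples `x₁, …, xₙ ∼ μ`
    (n : ℕ) (hn : 0 < n)
    (Xs : Fin n → Ω → X)
    (hXmeas : ∀ i, Measurable (Xs i))
    (hXdist : ∀ i, Measure.map (Xs i) ℙ = μm)
    -- `P` is the `H`-orthogonal projection onto `T = span b`
    (P : H →L[ℝ] H)
    (hP_mem : ∀ v, P v ∈ Submodule.span ℝ (Set.range b))
    (hP_fix : ∀ v ∈ Submodule.span ℝ (Set.range b), P v = v)
    (hP_sym : ∀ u v, ⟪P u, v⟫ = ⟪u, P v⟫) :
    ∀ g : H,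
      lamStar * ‖P g‖ ^ 2 ≤
        ∫ ω, ⟪g, ∑ k, ((1 / (n : ℝ)) * ∑ i, w (Xs i ω) *
          ⟪Lmap (Xs i ω) g, Lmap (Xs i ω) (b k)⟫) • b k⟫ ∂ℙ ∧
      (G = 1 →
        ∫ ω, ⟪g, ∑ k, ((1 / (n : ℝ)) * ∑ i, w (Xs i ω) *
          ⟪Lmap (Xs i ω) g, Lmap (Xs i ω) (b k)⟫) • b k⟫ ∂ℙ = ‖P g‖ ^ 2) := by
  intro g
  set F : Fin d → X → ℝ := fun k x => w x * ⟪Lmap x g, Lmap x (b k)⟫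
  have hF : ∀ k, ∫ x, F k x ∂μm = ⟪g, b k⟫ := fun k => by
    rw [hinner, hwμ _ fun x hx => by simp [hx k]]
  -- `empiricalMean Xs (F k)` is definitionally the empirical inner product `(g, bₖ)ₙ` of the goal.
  have hexp : ∫ ω, ⟪g, ∑ k, empiricalMean Xs (F k) ω • b k⟫ ∂ℙ = ∑ k, ⟪g, b k⟫ ^ 2 := by
    simp_rw [inner_sum, real_inner_smul_right, ← hF]
    exact integral_sum_empiricalMean_mul_integral (fun i => (hXmeas i).aemeasurable) hXdist hn F
  obtain ⟨a, ha⟩ := (Submodule.mem_span_range_iff_exists_fun ℝ).mp (hP_mem g)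
  have hGgram : G = Matrix.gram ℝ b := Matrix.ext hG
  have hGa : G *ᵥ a = fun k => ⟪g, b k⟫ := by
    ext k
    rw [hGgram, Matrix.gram_mulVec_apply, ha, ← hP_sym,
      hP_fix _ (Submodule.subset_span ⟨k, rfl⟩), real_inner_comm]
  have hnorm : ‖P g‖ ^ 2 = a ⬝ᵥ G *ᵥ a := by
    rw [hGgram, Matrix.dotProduct_gram_mulVec_self, ha]
  have hsum : ∑ k, ⟪g, b k⟫ ^ 2 = G *ᵥ a ⬝ᵥ G *ᵥ a := by
    simp [hGa, dotProduct, sq]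
  refine ⟨?_, fun hG1 => hexp.trans ?_⟩
  · calc lamStar * ‖P g‖ ^ 2 = lamStar * (a ⬝ᵥ G *ᵥ a) := by rw [hnorm]
      _ ≤ G *ᵥ a ⬝ᵥ G *ᵥ a := (hGgram ▸ Matrix.posSemidef_gram ℝ b).mul_dotProduct_mulVec_le
          (fun μ hμ h => hlamStar.2 ⟨hμ, h⟩) a
      _ = _ := (hexp.trans hsum).symm
  · rw [hsum, hnorm, hG1, Matrix.one_mulVec, dotProduct_comm]

/-- **Bias bound for the non-projection/quasi-projection** (Lemma B.1).
For a generating system `b₁, …, b_d` of `T` with Gramian `G` and smallest strictly positive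
eigenvalue `λ⋆(G)`, and i.i.d. samples `x₁, …, xₙ ∼ μ`, the estimator
`Pⁿ g := ∑ₖ (g, bₖ)ₙ bₖ` satisfies `E[(g, Pⁿ g)] ≥ λ⋆(G) ‖P g‖²` for every `g ∈ H`, where `P`
is the `H`-orthogonal projection onto `T`; equality holds when `G` is the identity matrix. -/
theorem quasi_projection_bias_bound
    {Ω : Type*} [MeasurableSpace Ω] (ℙ : Measure Ω) [IsProbabilityMeasure ℙ]
    {X : Type*} [MeasurableSpace X] (ρ μm : Measure X)
    [IsProbabilityMeasure ρ] [IsProbabilityMeasure μm]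
    (w : X → ℝ) (hw : ∀ x, 0 ≤ w x)
    {H : Type*} [NormedAddCommGroup H] [InnerProductSpace ℝ H]
    (l : ℕ) (Lmap : X → H →ₗ[ℝ] EuclideanSpace ℝ (Fin l))
    -- the inner product of `H` is induced by the family `L_x`
    (hinner : ∀ u v : H, ⟪u, v⟫ = ∫ x, ⟪Lmap x u, Lmap x v⟫ ∂ρ)
    -- the generating system of `T`
    (d : ℕ) (b : Fin d → H)
    -- `w dμ = dρ` on the support of `T`
    (hwμ : ∀ f : X → ℝ, (∀ x, (∀ k, Lmap x (b k) = 0) → f x = 0) →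
      ∫ x, f x ∂ρ = ∫ x, w x * f x ∂μm)
    -- the Gramian matrix and its smallest strictly positive eigenvalue
    (G : Matrix (Fin d) (Fin d) ℝ) (hG : ∀ k l', G k l' = ⟪b k, b l'⟫)
    (lamStar : ℝ)
    (hlamStar :
      IsLeast {c : ℝ | 0 < c ∧ Module.End.HasEigenvalue (Matrix.toLin' G) c} lamStar)
    -- the i.i.d. samples `x₁, …, xₙ ∼ μ`
    (n : ℕ) (hn : 0 < n)
    (Xs : Fin n → Ω → X)
    (hXmeas : ∀ i, Measurable (Xs i))
    (hXdist : ∀ i, Measure.map (Xs i) ℙ = μm)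
    (hXindep : ProbabilityTheory.iIndepFun (m := fun _ => ‹MeasurableSpace X›) Xs ℙ)
    -- `P` is the `H`-orthogonal projection onto `T = span b`
    (P : H →L[ℝ] H)
    (hP_mem : ∀ v, P v ∈ Submodule.span ℝ (Set.range b))
    (hP_fix : ∀ v ∈ Submodule.span ℝ (Set.range b), P v = v)
    (hP_sym : ∀ u v, ⟪P u, v⟫ = ⟪u, P v⟫) :
    ∀ g : H,
      lamStar * ‖P g‖ ^ 2 ≤
        ∫ ω, ⟪g, ∑ k, ((1 / (n : ℝ)) * ∑ i, w (Xs i ω) *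
          ⟪Lmap (Xs i ω) g, Lmap (Xs i ω) (b k)⟫) • b k⟫ ∂ℙ ∧
      (G = 1 →
        ∫ ω, ⟪g, ∑ k, ((1 / (n : ℝ)) * ∑ i, w (Xs i ω) *
          ⟪Lmap (Xs i ω) g, Lmap (Xs i ω) (b k)⟫) • b k⟫ ∂ℙ = ‖P g‖ ^ 2) :=
  quasi_projection_bias_bound_general ℙ ρ μm w l Lmap hinner d b hwμ G hG lamStar hlamStar n hn Xs
    hXmeas hXdist P hP_mem hP_fix hP_sym
end

section
/- Strong Polyak–Łojasiewicz inequality along strongly convex unit-speed curves. Let H be a real Hilbert space and L : H → ℝ Fréchet differentiable with gradient ∇L. Let γ : [0, T] → H be a differentiable curve with unit speed, ‖γ'(s)‖ = 1 for s ∈ (0, T). Suppose the composition g := L ∘ γ is λ-strongly convex on [0, T], i.e. g(t) ≥ g(s) + g'(s)(t − s) + (λ/2)(t − s)² for all t ∈ [0, T] and s ∈ (0, T). For s ∈ (0, T), let P_s be the H-orthogonal projection onto any closed subspace of H containing γ'(s). Then for every s ∈ (0, T): ‖P_s ∇L(γ(s))‖² ≥ 2λ (L(γ(s)) − L(γ(T))).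 -/
open MeasureTheory
open scoped RealInnerProductSpace

/-! Write `a := ⟪∇𝓛(γ s), γ' s⟫ = g'(s)`. Strong convexity at `t = T` gives
`g(T) ≥ g(s) + a d + (λ/2) d²` with `d = T - s`, and minimising the right-hand side over `d`
yields `2λ (g(s) - g(T)) ≤ a²`. Since `P s` is symmetric and fixes the unit vector `γ' s`,
`a = ⟪P s ∇𝓛(γ s), γ' s⟫`, so Cauchy–Schwarz bounds `a²` by `‖P s ∇𝓛(γ s)‖²`. -/

theorem two_mul_mul_sub_le_sq_of_le_add_mul_add_sq {lam g₀ g₁ a d : ℝ} (hlam : 0 ≤ lam)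
    (h : g₀ + a * d + lam / 2 * d ^ 2 ≤ g₁) :
    2 * lam * (g₀ - g₁) ≤ a ^ 2 := by
  nlinarith [sq_nonneg (a + lam * d)]

theorem LinearMap.IsSymmetric.abs_inner_le_norm_apply_mul_norm {H : Type*}
    [NormedAddCommGroup H] [InnerProductSpace ℝ H] {P : H →ₗ[ℝ] H} (hP : P.IsSymmetric)
    {v : H} (hv : P v = v) (x : H) :
    |⟪x, v⟫| ≤ ‖P x‖ * ‖v‖ := by
  calc |⟪x, v⟫| = |⟪P x, v⟫| := by rw [hP x v, hv]
    _ ≤ ‖P x‖ * ‖v‖ := abs_real_inner_le_norm _ _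

theorem strong_PL_along_strongly_convex_curve_general
    {H : Type*} [NormedAddCommGroup H] [InnerProductSpace ℝ H]
    (𝓛 : H → ℝ) (grad : H → H)
    (T lam : ℝ) (hlam : 0 < lam)
    (γ γ' : ℝ → H)
    (hunit : ∀ s ∈ Set.Ioo 0 T, ‖γ' s‖ = 1)
    -- `g := 𝓛 ∘ γ` is `λ`-strongly convex on `[0,T]`, where by the chain rule
    -- `g'(s) = ⟪∇𝓛(γ s), γ' s⟫`
    (hconv : ∀ t ∈ Set.Icc 0 T, ∀ s ∈ Set.Ioo 0 T,
      𝓛 (γ t) ≥ 𝓛 (γ s) + ⟪grad (γ s), γ' s⟫ * (t - s) + lam / 2 * (t - s) ^ 2)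
    -- `P s` is the orthogonal projection onto a closed subspace containing `γ' s`
    (P : ℝ → H →L[ℝ] H)
    (hP_sym : ∀ s g h, ⟪P s g, h⟫ = ⟪g, P s h⟫)
    (hP_fix : ∀ s ∈ Set.Ioo 0 T, P s (γ' s) = γ' s) :
    ∀ s ∈ Set.Ioo 0 T,
      2 * lam * (𝓛 (γ s) - 𝓛 (γ T)) ≤ ‖P s (grad (γ s))‖ ^ 2 := by
  intro s hs
  have hT : T ∈ Set.Icc 0 T := ⟨hs.1.le.trans hs.2.le, le_rfl⟩
  have hslope : |⟪grad (γ s), γ' s⟫| ≤ ‖P s (grad (γ s))‖ := by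
    simpa [hunit s hs] using
      LinearMap.IsSymmetric.abs_inner_le_norm_apply_mul_norm (P := (P s : H →ₗ[ℝ] H))
        (hP_sym s) (hP_fix s hs) (grad (γ s))
  calc 2 * lam * (𝓛 (γ s) - 𝓛 (γ T)) ≤ ⟪grad (γ s), γ' s⟫ ^ 2 :=
        two_mul_mul_sub_le_sq_of_le_add_mul_add_sq hlam.le (hconv T hT s hs)
    _ ≤ ‖P s (grad (γ s))‖ ^ 2 := sq_le_sq' (abs_le.mp hslope).1 (abs_le.mp hslope).2

/-- **Strong Polyak–Łojasiewicz inequality along strongly convex unit-speed curves**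
(Lemma G.2).  If `γ : [0,T] → H` is a differentiable unit-speed curve such that
`g := 𝓛 ∘ γ` is `λ`-strongly convex on `[0,T]` (with `g'(s) = ⟪∇𝓛(γ s), γ' s⟫` by the chain
rule), and `P s` is the orthogonal projection onto any closed subspace containing `γ' s`,
then `‖P s (∇𝓛(γ s))‖² ≥ 2λ (𝓛(γ s) - 𝓛(γ T))` for every `s ∈ (0,T)`. -/
theorem strong_PL_along_strongly_convex_curve
    {H : Type*} [NormedAddCommGroup H] [InnerProductSpace ℝ H] [CompleteSpace H]
    (𝓛 : H → ℝ) (grad : H → H)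
    (hgrad : ∀ x, HasGradientAt 𝓛 (grad x) x)
    (T lam : ℝ) (hT : 0 < T) (hlam : 0 < lam)
    (γ γ' : ℝ → H)
    -- `γ` is differentiable with derivative `γ'` and unit speed on `(0,T)`
    (hderiv : ∀ s ∈ Set.Ioo 0 T, HasDerivAt γ (γ' s) s)
    (hunit : ∀ s ∈ Set.Ioo 0 T, ‖γ' s‖ = 1)
    -- `g := 𝓛 ∘ γ` is `λ`-strongly convex on `[0,T]`, where by the chain rule
    -- `g'(s) = ⟪∇𝓛(γ s), γ' s⟫`
    (hconv : ∀ t ∈ Set.Icc 0 T, ∀ s ∈ Set.Ioo 0 T,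
      𝓛 (γ t) ≥ 𝓛 (γ s) + ⟪grad (γ s), γ' s⟫ * (t - s) + lam / 2 * (t - s) ^ 2)
    -- `P s` is the orthogonal projection onto a closed subspace containing `γ' s`
    (P : ℝ → H →L[ℝ] H)
    (hP_idem : ∀ s g, P s (P s g) = P s g)
    (hP_sym : ∀ s g h, ⟪P s g, h⟫ = ⟪g, P s h⟫)
    (hP_fix : ∀ s ∈ Set.Ioo 0 T, P s (γ' s) = γ' s) :
    ∀ s ∈ Set.Ioo 0 T,
      2 * lam * (𝓛 (γ s) - 𝓛 (γ T)) ≤ ‖P s (grad (γ s))‖ ^ 2 :=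
  strong_PL_along_strongly_convex_curve_general 𝓛 grad T lam hlam γ γ' hunit hconv P hP_sym hP_fix
end

section
/- Tangential gradient dominance near a manifold of positive reach. Let H be a real Hilbert space, u, v ∈ H, set g := v − u, and let P be the H-orthogonal projection onto a closed subspace of H (the tangent space of a manifold M at v). Suppose there are constants 0 < r ≤ R such that ‖g − P g‖ ≤ ‖g‖² / (2R) (the reach inequality at v) and ‖g‖ ≤ r. Then ‖(I − P) g‖ ≤ (r/R) ‖P g‖. -/
open scoped RealInnerProductSpace

/-! The tangential and normal parts `P g` and `g - P g` are orthogonal, so with `a := ‖P g‖`,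
`b := ‖g - P g‖` we have `a² + b² = ‖g‖² ≤ r²`. Since `b ≤ r ≤ R`, the reach inequality
`2 R b ≤ a² + b²` absorbs `b²` into `R b` and leaves `R b ≤ a² ≤ r a`. -/

section OrthogonalDecomposition

variable {H : Type*} [NormedAddCommGroup H] [InnerProductSpace ℝ H] {P : H → H}

theorem inner_map_sub_map_eq_zero (hP_idem : ∀ x, P (P x) = P x)
    (hP_sym : ∀ x y, ⟪P x, y⟫ = ⟪x, P y⟫) (x : H) : ⟪P x, x - P x⟫ = 0 := by
  rw [inner_sub_right, hP_sym x (P x), hP_idem, real_inner_comm, sub_self]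

theorem norm_sq_eq_norm_map_sq_add_norm_sub_map_sq (hP_idem : ∀ x, P (P x) = P x)
    (hP_sym : ∀ x y, ⟪P x, y⟫ = ⟪x, P y⟫) (x : H) :
    ‖x‖ ^ 2 = ‖P x‖ ^ 2 + ‖x - P x‖ ^ 2 := by
  simpa only [add_sub_cancel, sq] using
    norm_add_sq_eq_norm_sq_add_norm_sq_real (inner_map_sub_map_eq_zero hP_idem hP_sym x)

end OrthogonalDecomposition

theorem le_div_mul_of_le_sq_add_sq_div {a b r R : ℝ} (ha : 0 ≤ a) (hb : 0 ≤ b) (hr : 0 < r)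
    (hrR : r ≤ R) (hab : a ^ 2 + b ^ 2 ≤ r ^ 2) (hreach : b ≤ (a ^ 2 + b ^ 2) / (2 * R)) :
    b ≤ r / R * a := by
  have hR : 0 < R := hr.trans_le hrR
  have ha_le : a ≤ r := (abs_le_of_sq_le_sq' (by nlinarith) hr.le).2
  have hb_le : b ≤ R := (abs_le_of_sq_le_sq' (by nlinarith) hr.le).2.trans hrR
  have hreach' : 2 * R * b ≤ a ^ 2 + b ^ 2 := by
    rwa [le_div_iff₀ (by positivity), mul_comm] at hreach
  have hRb : R * b ≤ r * a := by
    nlinarith [mul_le_mul_of_nonneg_left hb_le hb, mul_le_mul_of_nonneg_left ha_le ha]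
  rw [div_mul_eq_mul_div, le_div_iff₀ hR]
  linarith

theorem tangential_gradient_dominance_positive_reach_general
    {H : Type*} [NormedAddCommGroup H] [InnerProductSpace ℝ H]
    (g : H)
    -- `P` is an `H`-orthogonal projection
    (P : H →L[ℝ] H)
    (hP_idem : ∀ x, P (P x) = P x)
    (hP_sym : ∀ x y, ⟪P x, y⟫ = ⟪x, P y⟫)
    (r R : ℝ) (hr : 0 < r) (hrR : r ≤ R)
    -- the reach inequality at `v`
    (hreach : ‖g - P g‖ ≤ ‖g‖ ^ 2 / (2 * R))
    (hgr : ‖g‖ ≤ r) :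
    ‖g - P g‖ ≤ r / R * ‖P g‖ := by
  have hpyth := norm_sq_eq_norm_map_sq_add_norm_sub_map_sq hP_idem hP_sym g
  refine le_div_mul_of_le_sq_add_sq_div (norm_nonneg _) (norm_nonneg _) hr hrR
    ?_ (hpyth ▸ hreach)
  rw [← hpyth]
  exact pow_le_pow_left₀ (norm_nonneg g) hgr 2

/-- **Tangential gradient dominance near a manifold of positive reach** (Lemma 4.6 /
Appendix I).  If `g := v - u`, `P` is an orthogonal projection (onto the tangent space of a
manifold at `v`), `0 < r ≤ R`, `‖g - P g‖ ≤ ‖g‖²/(2R)` (the reach inequality) and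
`‖g‖ ≤ r`, then `‖(I - P) g‖ ≤ (r/R) ‖P g‖`. -/
theorem tangential_gradient_dominance_positive_reach
    {H : Type*} [NormedAddCommGroup H] [InnerProductSpace ℝ H]
    (u v : H) (g : H) (hg : g = v - u)
    -- `P` is an `H`-orthogonal projection
    (P : H →L[ℝ] H)
    (hP_idem : ∀ x, P (P x) = P x)
    (hP_sym : ∀ x y, ⟪P x, y⟫ = ⟪x, P y⟫)
    (r R : ℝ) (hr : 0 < r) (hrR : r ≤ R)
    -- the reach inequality at `v`
    (hreach : ‖g - P g‖ ≤ ‖g‖ ^ 2 / (2 * R))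
    (hgr : ‖g‖ ≤ r) :
    ‖g - P g‖ ≤ r / R * ‖P g‖ :=
  tangential_gradient_dominance_positive_reach_general g P hP_idem hP_sym r R hr hrR hreach hgr
end
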